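/- arXiv:2502.05619 — 3 statements merged into one kernel-verified Lean document; each statement's English description precedes it below -/
import Mathlib

section
/- Every two-dimensional solvable evolution algebra over any field K is either abelian (zero product), or isomorphic to the algebra with natural basis {e_1, e_2} and product e_1^2 = e_1 + e_2, e_2^2 = -(e_1 + e_2), or isomorphic to the algebra with product e_1^2 = e_2, e_2^2 = 0; and these three algebras are pairwise non-isomorphic. -/
/-!
A solvable algebra has no nonzero subspace `W` with `W² = W`. Hence the squares `u = e₁²`,
`v = e₂²` of a natural basis are linearly dependent (otherwise `E² = E`), and an element whose
square lies on its own line squares to zero. If `u = v = 0` the algebra is abelian. If only `v`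
vanishes, `u² = 0` forces `u ∈ K e₂` and `(e₁, u)` realises `e₁² = e₂`. If `v = c u` with
`c ≠ 0`, write `u = α e₁ + β e₂`: then `u² = 0` reads `α² + c β² = 0`, and `(α⁻¹ e₁, α⁻² β e₂)`
realises `e₁² = e₁ + e₂`. The last two algebras are told apart by the annihilator: it is zero in
the first and contains `e₂` in the second.
-/
open Submodule

variable {K : Type} [Field K] {E : Type} [AddCommGroup E] [Module K E]

/-- The product of two submodules under a bilinear multiplication. -/
def mulSet (μ : E →ₗ[K] E →ₗ[K] E) (U V : Submodule K E) : Submodule K E :=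
  Submodule.span K {z | ∃ u ∈ U, ∃ v ∈ V, z = μ u v}

/-- Derived series starting from a submodule: `dser μ I 0 = I`,
`dser μ I (k+1) = (dser μ I k)·(dser μ I k)`.  Thus `dser μ ⊤ (k-1) = E^(k)`. -/
def dser (μ : E →ₗ[K] E →ₗ[K] E) (I : Submodule K E) : ℕ → Submodule K E
  | 0 => I
  | k + 1 => mulSet μ (dser μ I k) (dser μ I k)

/-- Lower central-type series: `lowerPow μ k = E^(k+1)` where
`E^1 = E` and `E^(k+1) = Σ_{i=1}^k E^i E^(k+1-i)`. -/
def lowerPow (μ : E →ₗ[K] E →ₗ[K] E) : ℕ → Submodule K E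
  | 0 => ⊤
  | k + 1 => ⨆ i : Fin (k + 1), mulSet μ (lowerPow μ i.1) (lowerPow μ (k - i.1))
  decreasing_by
  · exact i.2
  · omega

/-- A submodule closed under the multiplication. -/
def IsSubalg (μ : E →ₗ[K] E →ₗ[K] E) (U : Submodule K E) : Prop :=
  ∀ x ∈ U, ∀ y ∈ U, μ x y ∈ U

/-- A (two-sided) ideal. -/
def IsIdeal (μ : E →ₗ[K] E →ₗ[K] E) (I : Submodule K E) : Prop :=
  ∀ x ∈ I, ∀ y : E, μ x y ∈ I ∧ μ y x ∈ I

/-- Subalgebra generated by a set. -/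
def gen (μ : E →ₗ[K] E →ₗ[K] E) (s : Set E) : Submodule K E :=
  sInf {W | IsSubalg μ W ∧ s ⊆ W}

/-- Quasi-ideal: the subalgebra generated together with any subalgebra is the vector-space sum. -/
def QuasiIdeal (μ : E →ₗ[K] E →ₗ[K] E) (U : Submodule K E) : Prop :=
  IsSubalg μ U ∧ ∀ V : Submodule K E, IsSubalg μ V → gen μ (↑U ∪ ↑V) = U ⊔ V

/-- The subalgebra lattice is modular. -/
def ModularLat (μ : E →ₗ[K] E →ₗ[K] E) : Prop :=
  ∀ U V W : Submodule K E, IsSubalg μ U → IsSubalg μ V → IsSubalg μ W → U ≤ W →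
    gen μ (↑U ∪ ↑(V ⊓ W)) = gen μ (↑U ∪ ↑V) ⊓ W

/-- The subalgebra lattice is distributive. -/
def DistribLat (μ : E →ₗ[K] E →ₗ[K] E) : Prop :=
  ∀ U V W : Submodule K E, IsSubalg μ U → IsSubalg μ V → IsSubalg μ W →
    gen μ (↑U ∪ ↑(V ⊓ W)) = gen μ (↑U ∪ ↑V) ⊓ gen μ (↑U ∪ ↑W)

/-- Supersolvable: a complete flag of ideals. -/
def Supersolvable (μ : E →ₗ[K] E →ₗ[K] E) : Prop :=
  ∃ I : ℕ → Submodule K E, (∀ i, IsIdeal μ (I i)) ∧ (∀ i, I i ≤ I (i + 1)) ∧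
    (∀ i ≤ Module.finrank K E, Module.finrank K (I i) = i) ∧ I (Module.finrank K E) = ⊤

/-- Maximal subalgebra `A` of the subalgebra `B`. -/
def MaxIn (μ : E →ₗ[K] E →ₗ[K] E) (A B : Submodule K E) : Prop :=
  A ≤ B ∧ A ≠ B ∧ ∀ W : Submodule K E, IsSubalg μ W → A ≤ W → W ≤ B → W = A ∨ W = B

def IsModelB (μ : E →ₗ[K] E →ₗ[K] E) (f : Module.Basis (Fin 2) K E) : Prop :=
  μ (f 0) (f 1) = 0 ∧ μ (f 0) (f 0) = f 0 + f 1 ∧ μ (f 1) (f 1) = -(f 0 + f 1)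

def IsModelC (μ : E →ₗ[K] E →ₗ[K] E) (f : Module.Basis (Fin 2) K E) : Prop :=
  μ (f 0) (f 1) = 0 ∧ μ (f 0) (f 0) = f 1 ∧ μ (f 1) (f 1) = 0

section

variable {μ : E →ₗ[K] E →ₗ[K] E}

lemma Module.Basis.exists_eq_smul_add_smul (b : Module.Basis (Fin 2) K E) (z : E) :
    ∃ p q : K, z = p • b 0 + q • b 1 :=
  ⟨b.repr z 0, b.repr z 1, by rw [← Fin.sum_univ_two (fun i => b.repr z i • b i), b.sum_repr]⟩

lemma Module.Basis.add_ne_zero {ι : Type*} (b : Module.Basis ι K E) {i j : ι} (hij : i ≠ j) :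
    b i + b j ≠ 0 := by
  intro h
  simpa [Finsupp.single_apply, hij] using congrArg (fun x => b.repr x i) h

lemma mulSet_mono {U U' V V' : Submodule K E} (hU : U ≤ U') (hV : V ≤ V') :
    mulSet μ U V ≤ mulSet μ U' V' := by
  apply span_mono
  rintro z ⟨u, hu, v, hv, rfl⟩
  exact ⟨u, hU hu, v, hV hv, rfl⟩

lemma le_dser_top_of_mulSet_self_eq {W : Submodule K E} (hW : mulSet μ W W = W) (m : ℕ) :
    W ≤ dser μ ⊤ m := by
  induction m with
  | zero => exact le_top
  | succ k ih =>
    calc W = mulSet μ W W := hW.symm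
      _ ≤ dser μ ⊤ (k + 1) := mulSet_mono ih ih

lemma eq_bot_of_mulSet_self_eq (hsolv : ∃ m, dser μ ⊤ m = ⊥) {W : Submodule K E}
    (hW : mulSet μ W W = W) : W = ⊥ := by
  obtain ⟨m, hm⟩ := hsolv
  exact le_bot_iff.mp (hm ▸ le_dser_top_of_mulSet_self_eq hW m)

lemma mulSet_span_singleton_self {z : E} {s : K} (hz : μ z z = s • z) (hs : s ≠ 0) :
    mulSet μ (span K {z}) (span K {z}) = span K {z} := by
  apply le_antisymm
  · refine span_le.mpr ?_
    rintro w ⟨x, hx, y, hy, rfl⟩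
    obtain ⟨p, rfl⟩ := mem_span_singleton.mp hx
    obtain ⟨q, rfl⟩ := mem_span_singleton.mp hy
    have hpq : μ (p • z) (q • z) = (p * q * s) • z := by
      simp only [map_smul, LinearMap.smul_apply, hz]
      module
    exact hpq ▸ smul_mem _ _ (mem_span_singleton_self z)
  · refine span_le.mpr (Set.singleton_subset_iff.mpr (subset_span ?_))
    refine ⟨s⁻¹ • z, smul_mem _ _ (mem_span_singleton_self z), z, mem_span_singleton_self z, ?_⟩
    rw [map_smul, LinearMap.smul_apply, hz, smul_smul, inv_mul_cancel₀ hs, one_smul]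

lemma mul_self_eq_zero_of_mul_self_eq_smul (hsolv : ∃ m, dser μ ⊤ m = ⊥) {z : E} {s : K}
    (hz : μ z z = s • z) : μ z z = 0 := by
  rcases eq_or_ne s 0 with rfl | hs
  · rwa [zero_smul] at hz
  · have hspan := eq_bot_of_mulSet_self_eq hsolv (mulSet_span_singleton_self hz hs)
    rw [span_singleton_eq_bot.mp hspan, map_zero]

lemma not_linearIndependent_mul_self (hsolv : ∃ m, dser μ ⊤ m = ⊥)
    (b : Module.Basis (Fin 2) K E) :
    ¬ LinearIndependent K ![μ (b 0) (b 0), μ (b 1) (b 1)] := by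
  intro hli
  have hspan : span K (Set.range ![μ (b 0) (b 0), μ (b 1) (b 1)]) = ⊤ :=
    hli.span_eq_top_of_card_eq_finrank (by simp [Module.finrank_eq_card_basis b])
  have htop : mulSet μ ⊤ ⊤ = ⊤ := by
    refine eq_top_iff.mpr (hspan.ge.trans (span_le.mpr ?_))
    rintro _ ⟨i, rfl⟩
    fin_cases i
    exacts [subset_span ⟨b 0, mem_top, b 0, mem_top, rfl⟩,
      subset_span ⟨b 1, mem_top, b 1, mem_top, rfl⟩]
  have h0 : μ (b 0) (b 0) ∈ (⊥ : Submodule K E) :=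
    eq_bot_of_mulSet_self_eq hsolv htop ▸ mem_top
  exact hli.ne_zero 0 ((mem_bot K).mp h0)

lemma mul_self_smul_add_smul {x y : E} (hxy : μ x y = 0) (hyx : μ y x = 0) (p q : K) :
    μ (p • x + q • y) (p • x + q • y) = (p * p) • μ x x + (q * q) • μ y y := by
  simp only [map_add, map_smul, LinearMap.add_apply, LinearMap.smul_apply, hxy, hyx,
    smul_zero, add_zero, zero_add, smul_smul]

lemma exists_isModelC_of_mul_self_eq_zero (hsolv : ∃ m, dser μ ⊤ m = ⊥)
    (b : Module.Basis (Fin 2) K E) (h01 : μ (b 0) (b 1) = 0) (h10 : μ (b 1) (b 0) = 0)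
    (hu : μ (b 0) (b 0) ≠ 0) (hv : μ (b 1) (b 1) = 0) :
    ∃ f, IsModelC μ f := by
  obtain ⟨α, β, hαβ⟩ := b.exists_eq_smul_add_smul (μ (b 0) (b 0))
  have huu : μ (μ (b 0) (b 0)) (μ (b 0) (b 0)) = (α * α) • μ (b 0) (b 0) := by
    conv_lhs => rw [hαβ, mul_self_smul_add_smul h01 h10, hv, smul_zero, add_zero]
  have hα : α = 0 := by
    have := mul_self_eq_zero_of_mul_self_eq_smul hsolv huu
    rw [huu, smul_eq_zero, mul_self_eq_zero] at this
    exact this.resolve_right hu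
  have hu' : μ (b 0) (b 0) = β • b 1 := by rw [hαβ, hα, zero_smul, zero_add]
  have hβ : β ≠ 0 := by rintro rfl; exact hu (by rw [hu', zero_smul])
  refine ⟨b.unitsSMul ![1, Units.mk0 β hβ], ?_, ?_, ?_⟩ <;>
    simp only [Module.Basis.unitsSMul_apply, Matrix.cons_val_zero, Matrix.cons_val_one,
      Units.smul_def, Units.val_mk0, one_smul, map_smul, LinearMap.smul_apply,
      h01, hv, hu', smul_zero]

lemma exists_isModelB_of_mul_self_eq_smul (hsolv : ∃ m, dser μ ⊤ m = ⊥)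
    (b : Module.Basis (Fin 2) K E) (h01 : μ (b 0) (b 1) = 0) (h10 : μ (b 1) (b 0) = 0) {c : K}
    (hu : μ (b 0) (b 0) ≠ 0) (hc : c ≠ 0)
    (hv : μ (b 1) (b 1) = c • μ (b 0) (b 0)) : ∃ f, IsModelB μ f := by
  obtain ⟨α, β, hαβ⟩ := b.exists_eq_smul_add_smul (μ (b 0) (b 0))
  have huu : μ (μ (b 0) (b 0)) (μ (b 0) (b 0)) = (α * α + c * (β * β)) • μ (b 0) (b 0) := by
    conv_lhs => rw [hαβ, mul_self_smul_add_smul h01 h10, hv]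
    module
  have hs : α * α + c * (β * β) = 0 := by
    have := mul_self_eq_zero_of_mul_self_eq_smul hsolv huu
    rw [huu, smul_eq_zero] at this
    exact this.resolve_right hu
  have hα : α ≠ 0 := by
    rintro rfl
    have hβ : β = 0 := by simpa [hc] using hs
    exact hu (by rw [hαβ, hβ, zero_smul, zero_smul, add_zero])
  have hβ : β ≠ 0 := by
    rintro rfl
    exact hα (by simpa using hs)
  refine ⟨b.unitsSMul ![Units.mk0 α⁻¹ (inv_ne_zero hα),
    Units.mk0 (α⁻¹ * α⁻¹ * β) (by positivity)], ?_, ?_, ?_⟩ <;>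
    simp only [Module.Basis.unitsSMul_apply, Matrix.cons_val_zero, Matrix.cons_val_one,
      Units.smul_def, Units.val_mk0, map_smul, LinearMap.smul_apply, h01, smul_zero, hv]
  · rw [hαβ]
    match_scalars <;> field_simp
  · rw [hαβ]
    match_scalars <;> field_simp <;> linear_combination hs

lemma eq_zero_or_exists_isModelB_or_exists_isModelC (b : Module.Basis (Fin 2) K E)
    (hnat : ∀ i j : Fin 2, i ≠ j → μ (b i) (b j) = 0) (hsolv : ∃ m, dser μ ⊤ m = ⊥) :
    μ = 0 ∨ (∃ f, IsModelB μ f) ∨ (∃ f, IsModelC μ f) := by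
  have h01 : μ (b 0) (b 1) = 0 := hnat 0 1 (by decide)
  have h10 : μ (b 1) (b 0) = 0 := hnat 1 0 (by decide)
  by_cases hu : μ (b 0) (b 0) = 0 <;> by_cases hv : μ (b 1) (b 1) = 0
  · refine .inl (b.ext fun i => b.ext fun j => ?_)
    fin_cases i <;> fin_cases j
    exacts [hu, h01, h10, hv]
  · have hb' := exists_isModelC_of_mul_self_eq_zero hsolv (b.reindex (Equiv.swap 0 1))
    simp only [Module.Basis.reindex_apply, Equiv.symm_swap, Equiv.swap_apply_left,
      Equiv.swap_apply_right] at hb'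
    exact .inr (.inr (hb' h10 h01 hv hu))
  · exact .inr (.inr (exists_isModelC_of_mul_self_eq_zero hsolv b h01 h10 hu hv))
  · obtain ⟨c, hc⟩ : ∃ c : K, c • μ (b 0) (b 0) = μ (b 1) (b 1) := by
      simpa [LinearIndependent.pair_iff' hu] using not_linearIndependent_mul_self hsolv b
    have hc0 : c ≠ 0 := by rintro rfl; exact hv (by rw [← hc, zero_smul])
    exact .inr (.inl (exists_isModelB_of_mul_self_eq_smul hsolv b h01 h10 hu hc0 hc.symm))

lemma IsModelB.eq_zero_of_apply_eq_zero (hcomm : ∀ x y : E, μ x y = μ y x)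
    {f : Module.Basis (Fin 2) K E} (hf : IsModelB μ f) {z : E} (hz : μ z = 0) : z = 0 := by
  obtain ⟨h01, h00, h11⟩ := hf
  have h10 : μ (f 1) (f 0) = 0 := by rw [hcomm, h01]
  obtain ⟨p, q, rfl⟩ := f.exists_eq_smul_add_smul z
  have hz0 : p • (f 0 + f 1) = 0 := by
    simpa only [map_add, map_smul, LinearMap.add_apply, LinearMap.smul_apply, h00, h10,
      smul_zero, add_zero, LinearMap.zero_apply] using LinearMap.congr_fun hz (f 0)
  have hz1 : q • -(f 0 + f 1) = 0 := by
    simpa only [map_add, map_smul, LinearMap.add_apply, LinearMap.smul_apply, h01, h11,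
      smul_zero, zero_add, LinearMap.zero_apply] using LinearMap.congr_fun hz (f 1)
  rw [smul_neg, neg_eq_zero] at hz1
  have hsum : f 0 + f 1 ≠ 0 := f.add_ne_zero zero_ne_one
  rw [(smul_eq_zero.mp hz0).resolve_right hsum, (smul_eq_zero.mp hz1).resolve_right hsum,
    zero_smul, zero_smul, add_zero]

lemma IsModelC.apply_basis_one_eq_zero (hcomm : ∀ x y : E, μ x y = μ y x)
    {f : Module.Basis (Fin 2) K E} (hf : IsModelC μ f) : μ (f 1) = 0 :=
  f.ext fun i => by
    fin_cases i
    exacts [(hcomm _ _).trans hf.1, hf.2.2]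

end

/-- every two-dimensional solvable evolution algebra is abelian, or has a
natural basis with `f₁² = f₁ + f₂, f₂² = -(f₁+f₂)`, or one with `f₁² = f₂, f₂² = 0`;
and these three possibilities are mutually exclusive (the models are pairwise
non-isomorphic). -/
theorem stmt4 (μ : E →ₗ[K] E →ₗ[K] E)
    (hcomm : ∀ x y : E, μ x y = μ y x)
    (b : Module.Basis (Fin 2) K E)
    (hnat : ∀ i j : Fin 2, i ≠ j → μ (b i) (b j) = 0)
    (hsolv : ∃ m : ℕ, dser μ ⊤ m = ⊥) :
    ((μ = 0) ∨
      (∃ f : Module.Basis (Fin 2) K E, μ (f 0) (f 1) = 0 ∧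
        μ (f 0) (f 0) = f 0 + f 1 ∧ μ (f 1) (f 1) = -(f 0 + f 1)) ∨
      (∃ f : Module.Basis (Fin 2) K E, μ (f 0) (f 1) = 0 ∧
        μ (f 0) (f 0) = f 1 ∧ μ (f 1) (f 1) = 0)) ∧
    ¬ ((μ = 0) ∧
      (∃ f : Module.Basis (Fin 2) K E, μ (f 0) (f 1) = 0 ∧
        μ (f 0) (f 0) = f 0 + f 1 ∧ μ (f 1) (f 1) = -(f 0 + f 1))) ∧
    ¬ ((μ = 0) ∧
      (∃ f : Module.Basis (Fin 2) K E, μ (f 0) (f 1) = 0 ∧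
        μ (f 0) (f 0) = f 1 ∧ μ (f 1) (f 1) = 0)) ∧
    ¬ ((∃ f : Module.Basis (Fin 2) K E, μ (f 0) (f 1) = 0 ∧
        μ (f 0) (f 0) = f 0 + f 1 ∧ μ (f 1) (f 1) = -(f 0 + f 1)) ∧
      (∃ f : Module.Basis (Fin 2) K E, μ (f 0) (f 1) = 0 ∧
        μ (f 0) (f 0) = f 1 ∧ μ (f 1) (f 1) = 0)) := by
  refine ⟨eq_zero_or_exists_isModelB_or_exists_isModelC b hnat hsolv, ?_, ?_, ?_⟩
  · rintro ⟨rfl, f, hf⟩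
    exact f.ne_zero 0 (IsModelB.eq_zero_of_apply_eq_zero hcomm hf rfl)
  · rintro ⟨rfl, f, -, hf, -⟩
    exact f.ne_zero 1 hf.symm
  · rintro ⟨⟨f, hf⟩, ⟨g, hg⟩⟩
    exact g.ne_zero 1
      (IsModelB.eq_zero_of_apply_eq_zero hcomm hf (IsModelC.apply_basis_one_eq_zero hcomm hg))
end

section
/- Let E be a solvable evolution algebra with index of solvability n and suppose E^(m) (for some m < n) is an ideal of E. Then the quotient E/E^(m) is an evolution algebra with index of solvability exactly m, and its derived series satisfies (E/E^(m))^(l) = E^(l)/E^(m) for l = 1,...,m. -/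
open Submodule

variable {K : Type} [Field K] {E : Type} [AddCommGroup E] [Module K E]

/-!
A linear surjection `f` that is multiplicative carries products of subspaces to products of
their images, hence the derived series of `E` onto that of the quotient `E ⧸ E^(m)`, and it
carries a natural basis to a spanning family of pairwise orthogonal vectors, from which a
natural basis of the quotient can be extracted. Since `E^(m)` is the kernel of the quotient
map, `(E ⧸ E^(m))^(l+1) = 0` means `E^(l+1) ≤ E^(m)`; for `l + 1 < m` this would make the
derived series of `E` stationary at `E^(l+1) ≠ 0`, contradicting `E^(n) = 0`.
-/

section DerivedSeries

variable {F : Type} [AddCommGroup F] [Module K F]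
  (μ : E →ₗ[K] E →ₗ[K] E) (ν : F →ₗ[K] F →ₗ[K] F)

lemma mulSet_mono_s11 {A A' B B' : Submodule K E} (hA : A ≤ A') (hB : B ≤ B') :
    mulSet μ A B ≤ mulSet μ A' B' := by
  apply span_mono
  rintro z ⟨u, hu, v, hv, rfl⟩
  exact ⟨u, hA hu, v, hB hv, rfl⟩

lemma dser_top_antitone : Antitone (dser μ ⊤) := by
  refine antitone_nat_of_succ_le fun k => ?_
  induction k with
  | zero => exact le_top
  | succ k ih => exact mulSet_mono_s11 μ ih ih

lemma dser_eq_of_succ_eq (I : Submodule K E) {l : ℕ} (h : dser μ I (l + 1) = dser μ I l) :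
    ∀ k, l ≤ k → dser μ I k = dser μ I l := by
  intro k hk
  induction k, hk using Nat.le_induction with
  | base => rfl
  | succ k _ ih => rw [← h, dser, ih, dser]

lemma dser_top_eq_of_le {l j : ℕ} (hlj : l < j) (h : dser μ ⊤ l ≤ dser μ ⊤ j) :
    ∀ k, l ≤ k → dser μ ⊤ k = dser μ ⊤ l :=
  dser_eq_of_succ_eq μ ⊤ <|
    le_antisymm (dser_top_antitone μ l.le_succ) (h.trans (dser_top_antitone μ hlj))

variable {μ ν} {f : E →ₗ[K] F} (hf : ∀ x y : E, ν (f x) (f y) = f (μ x y))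
include hf

lemma map_mulSet (A B : Submodule K E) :
    (mulSet μ A B).map f = mulSet ν (A.map f) (B.map f) := by
  rw [mulSet, map_span]
  congr 1
  ext z
  constructor
  · rintro ⟨w, ⟨u, hu, v, hv, rfl⟩, rfl⟩
    exact ⟨f u, ⟨u, hu, rfl⟩, f v, ⟨v, hv, rfl⟩, (hf u v).symm⟩
  · rintro ⟨_, ⟨u, hu, rfl⟩, _, ⟨v, hv, rfl⟩, rfl⟩
    exact ⟨μ u v, ⟨u, hu, v, hv, rfl⟩, (hf u v).symm⟩

lemma map_dser (I : Submodule K E) (l : ℕ) : (dser μ I l).map f = dser ν (I.map f) l := by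
  induction l with
  | zero => rfl
  | succ l ih => rw [dser, map_mulSet hf, ih, dser]

lemma exists_natural_basis_of_surjective (hsurj : Function.Surjective f)
    {ι : Type} [Finite ι] (b : Module.Basis ι K E)
    (hnat : ∀ i j : ι, i ≠ j → μ (b i) (b j) = 0) :
    ∃ (k : ℕ) (c : Module.Basis (Fin k) K F), ∀ i j : Fin k, i ≠ j → ν (c i) (c j) = 0 := by
  obtain ⟨κ, a, ha, hspan, hli⟩ := exists_linearIndependent'.{0} K (f ∘ b)
  have : Finite κ := Finite.of_injective a ha
  have htop : ⊤ ≤ span K (Set.range (f ∘ b ∘ a)) := by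
    rw [← Function.comp_assoc, hspan, Set.range_comp, ← map_span, b.span_eq, Submodule.map_top,
      LinearMap.range_eq_top.2 hsurj]
  let e := Finite.equivFin κ
  refine ⟨_, (Module.Basis.mk hli htop).reindex e, fun i j hij => ?_⟩
  simp only [Module.Basis.reindex_apply, Module.Basis.mk_apply, Function.comp_apply]
  rw [hf, hnat _ _ (ha.ne (e.symm.injective.ne hij)), map_zero]

end DerivedSeries

theorem stmt11_general {N n m : ℕ} (hmn : m < n)
    (μ : E →ₗ[K] E →ₗ[K] E)
    (b : Module.Basis (Fin N) K E)
    (hnat : ∀ i j : Fin N, i ≠ j → μ (b i) (b j) = 0)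
    (hidx : dser μ ⊤ (n - 1) = ⊥ ∧ ∀ l : ℕ, l + 1 < n → dser μ ⊤ l ≠ ⊥)
    (μ' : (E ⧸ dser μ ⊤ (m - 1)) →ₗ[K] (E ⧸ dser μ ⊤ (m - 1)) →ₗ[K]
      (E ⧸ dser μ ⊤ (m - 1)))
    (hμ' : ∀ x y : E,
      μ' (Submodule.Quotient.mk x) (Submodule.Quotient.mk y) =
        Submodule.Quotient.mk (μ x y)) :
    (∃ (k : ℕ) (c : Module.Basis (Fin k) K (E ⧸ dser μ ⊤ (m - 1))),
      ∀ i j : Fin k, i ≠ j → μ' (c i) (c j) = 0) ∧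
    (dser μ' ⊤ (m - 1) = ⊥ ∧ ∀ l : ℕ, l + 1 < m → dser μ' ⊤ l ≠ ⊥) ∧
    (∀ l : ℕ, l + 1 ≤ m →
      dser μ' ⊤ l = Submodule.map (dser μ ⊤ (m - 1)).mkQ (dser μ ⊤ l)) := by
  have hmap : ∀ l, dser μ' ⊤ l = (dser μ ⊤ l).map (dser μ ⊤ (m - 1)).mkQ := fun l => by
    rw [map_dser hμ', Submodule.map_top, range_mkQ]
  have hbot_iff : ∀ l, dser μ' ⊤ l = ⊥ ↔ dser μ ⊤ l ≤ dser μ ⊤ (m - 1) := fun l => by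
    rw [hmap, eq_bot_iff, map_le_iff_le_comap, comap_bot, ker_mkQ]
  refine ⟨exists_natural_basis_of_surjective hμ' (mkQ_surjective _) b hnat,
    ⟨(hbot_iff _).2 le_rfl, fun l hl hbot => ?_⟩, fun l _ => hmap l⟩
  have hstat := dser_top_eq_of_le μ (by omega) ((hbot_iff l).1 hbot) (n - 1) (by omega)
  exact hidx.2 l (by omega) (hstat ▸ hidx.1)

/-- if `E` is a solvable evolution algebra with index of solvability `n`
and `E^(m)` (with `m < n`) is an ideal, then the quotient `E/E^(m)` (with the induced
multiplication `μ'`) is an evolution algebra with index of solvability exactly `m`,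
and `(E/E^(m))^(l) = E^(l)/E^(m)` for `l = 1, …, m`.
(Here `dser μ ⊤ (k-1) = E^(k)`.) -/
theorem stmt11 {N n m : ℕ} (hm : 1 ≤ m) (hmn : m < n)
    (μ : E →ₗ[K] E →ₗ[K] E)
    (hcomm : ∀ x y : E, μ x y = μ y x)
    (b : Module.Basis (Fin N) K E)
    (hnat : ∀ i j : Fin N, i ≠ j → μ (b i) (b j) = 0)
    (hidx : dser μ ⊤ (n - 1) = ⊥ ∧ ∀ l : ℕ, l + 1 < n → dser μ ⊤ l ≠ ⊥)
    (hI : IsIdeal μ (dser μ ⊤ (m - 1)))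
    (μ' : (E ⧸ dser μ ⊤ (m - 1)) →ₗ[K] (E ⧸ dser μ ⊤ (m - 1)) →ₗ[K]
      (E ⧸ dser μ ⊤ (m - 1)))
    (hμ' : ∀ x y : E,
      μ' (Submodule.Quotient.mk x) (Submodule.Quotient.mk y) =
        Submodule.Quotient.mk (μ x y)) :
    (∃ (k : ℕ) (c : Module.Basis (Fin k) K (E ⧸ dser μ ⊤ (m - 1))),
      ∀ i j : Fin k, i ≠ j → μ' (c i) (c j) = 0) ∧
    (dser μ' ⊤ (m - 1) = ⊥ ∧ ∀ l : ℕ, l + 1 < m → dser μ' ⊤ l ≠ ⊥) ∧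
    (∀ l : ℕ, l + 1 ≤ m →
      dser μ' ⊤ l = Submodule.map (dser μ ⊤ (m - 1)).mkQ (dser μ ⊤ l)) :=
  stmt11_general hmn μ b hnat hidx μ' hμ'
end

section
/- Let E be the 3-dimensional evolution algebra over ℂ with natural basis {e_1, e_2, e_3} and product e_1^2 = e_2^2 = e_3, e_3^2 = 0. Then span{e_1 + i e_2} and span{e_1 - i e_2} are one-dimensional subalgebras that are not quasi-ideals, and hence the subalgebra lattice of E over ℂ is not modular. -/
open Submodule

variable {K : Type} [Field K] {E : Type} [AddCommGroup E] [Module K E]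

/-- The evolution-algebra multiplication on `Fin n → K` determined by the values
`c i = eᵢ²` on the standard basis: `x·y = ∑ i, (xᵢ yᵢ) • c i`. -/
noncomputable def evolMul {K : Type} [Field K] {n : ℕ} (c : Fin n → (Fin n → K)) :
    (Fin n → K) →ₗ[K] (Fin n → K) →ₗ[K] (Fin n → K) where
  toFun x :=
    { toFun := fun y => ∑ i, (x i * y i) • c i
      map_add' := by
        intro y z
        simp [Pi.add_apply, mul_add, add_smul, Finset.sum_add_distrib]
      map_smul' := by
        intro a y
        simp [Pi.smul_apply, smul_smul, Finset.smul_sum, mul_left_comm] }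
  map_add' := by
    intro x z
    ext y
    simp [Pi.add_apply, add_mul, add_smul, Finset.sum_add_distrib]
  map_smul' := by
    intro a x
    ext y
    simp [Pi.smul_apply, smul_smul, Finset.smul_sum, mul_assoc, Finset.mul_sum]

noncomputable def u15p : Fin 3 → ℂ :=
  (Pi.single 0 1 : Fin 3 → ℂ) + Complex.I • (Pi.single 1 1 : Fin 3 → ℂ)

noncomputable def u15m : Fin 3 → ℂ :=
  (Pi.single 0 1 : Fin 3 → ℂ) - Complex.I • (Pi.single 1 1 : Fin 3 → ℂ)


lemma gen_subalg' (μ : E →ₗ[K] E →ₗ[K] E) (s : Set E) : IsSubalg μ (gen μ s) := by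
  intro x hx y hy
  rw [gen, Submodule.mem_sInf] at *
  intro W hW
  exact hW.1 x (hx W hW) y (hy W hW)

lemma subset_gen' (μ : E →ₗ[K] E →ₗ[K] E) (s : Set E) : s ⊆ gen μ s := by
  intro x hx
  rw [gen, SetLike.mem_coe, Submodule.mem_sInf]
  exact fun W hW => hW.2 hx

lemma gen_le' {μ : E →ₗ[K] E →ₗ[K] E} {s : Set E} {U : Submodule K E}
    (hU : IsSubalg μ U) (hs : s ⊆ U) : gen μ s ≤ U := sInf_le ⟨hU, hs⟩

lemma mul3 (x y : Fin 3 → ℂ) :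
    evolMul ![Pi.single 2 1, Pi.single 2 1, (0 : Fin 3 → ℂ)] x y
      = (x 0 * y 0 + x 1 * y 1) • (Pi.single 2 1 : Fin 3 → ℂ) := by
  show ∑ i, (x i * y i) • (![Pi.single 2 1, Pi.single 2 1, (0 : Fin 3 → ℂ)] i) = _
  rw [Fin.sum_univ_three]
  simp [add_smul]

lemma u15p_apply : u15p 0 = 1 ∧ u15p 1 = Complex.I ∧ u15p 2 = 0 := by
  refine ⟨?_, ?_, ?_⟩ <;> simp [u15p, Pi.single_apply]

lemma u15m_apply : u15m 0 = 1 ∧ u15m 1 = -Complex.I ∧ u15m 2 = 0 := by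
  refine ⟨?_, ?_, ?_⟩ <;> simp [u15m, Pi.single_apply]

noncomputable abbrev μ3 : (Fin 3 → ℂ) →ₗ[ℂ] (Fin 3 → ℂ) →ₗ[ℂ] (Fin 3 → ℂ) :=
  evolMul ![Pi.single 2 1, Pi.single 2 1, (0 : Fin 3 → ℂ)]

lemma e3_apply : (Pi.single 2 1 : Fin 3 → ℂ) 0 = 0 ∧ (Pi.single 2 1 : Fin 3 → ℂ) 1 = 0 ∧
    (Pi.single 2 1 : Fin 3 → ℂ) 2 = 1 := by
  refine ⟨?_, ?_, ?_⟩ <;> simp [Pi.single_apply]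

lemma u15p_ne : u15p ≠ 0 := by
  intro h
  have := congrFun h 0
  rw [u15p_apply.1] at this
  simp at this

lemma u15m_ne : u15m ≠ 0 := by
  intro h
  have := congrFun h 0
  rw [u15m_apply.1] at this
  simp at this

lemma subalg_p : IsSubalg μ3 (span ℂ {u15p}) := by
  intro x hx y hy
  rw [Submodule.mem_span_singleton] at hx hy
  obtain ⟨a, rfl⟩ := hx
  obtain ⟨b, rfl⟩ := hy
  have : μ3 (a • u15p) (b • u15p) = 0 := by
    rw [mul3]
    simp only [Pi.smul_apply, u15p_apply.1, u15p_apply.2.1, smul_eq_mul]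
    have : a * 1 * (b * 1) + a * Complex.I * (b * Complex.I) = 0 := by
      ring_nf
      rw [Complex.I_sq]
      ring
    rw [this, zero_smul]
  rw [this]
  exact Submodule.zero_mem _

lemma subalg_m : IsSubalg μ3 (span ℂ {u15m}) := by
  intro x hx y hy
  rw [Submodule.mem_span_singleton] at hx hy
  obtain ⟨a, rfl⟩ := hx
  obtain ⟨b, rfl⟩ := hy
  have : μ3 (a • u15m) (b • u15m) = 0 := by
    rw [mul3]
    simp only [Pi.smul_apply, u15m_apply.1, u15m_apply.2.1, smul_eq_mul]
    have : a * 1 * (b * 1) + a * -Complex.I * (b * -Complex.I) = 0 := by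
      ring_nf
      rw [Complex.I_sq]
      ring
    rw [this, zero_smul]
  rw [this]
  exact Submodule.zero_mem _

lemma mul_pm : μ3 u15p u15m = (2 : ℂ) • (Pi.single 2 1 : Fin 3 → ℂ) := by
  rw [mul3, u15p_apply.1, u15p_apply.2.1, u15m_apply.1, u15m_apply.2.1]
  have : (1 : ℂ) * 1 + Complex.I * -Complex.I = 2 := by
    ring_nf
    rw [Complex.I_sq]
    ring
  rw [this]

lemma e3_mem_gen : (2 : ℂ) • (Pi.single 2 1 : Fin 3 → ℂ) ∈
    gen μ3 (↑(span ℂ {u15p}) ∪ ↑(span ℂ {u15m})) := by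
  rw [← mul_pm]
  apply gen_subalg'
  · exact subset_gen' _ _ (Or.inl (Submodule.mem_span_singleton_self _))
  · exact subset_gen' _ _ (Or.inr (Submodule.mem_span_singleton_self _))

lemma e3_notmem_sup : (2 : ℂ) • (Pi.single 2 1 : Fin 3 → ℂ) ∉
    span ℂ {u15p} ⊔ span ℂ {u15m} := by
  intro h
  rw [← Submodule.span_union, Set.union_singleton, Submodule.mem_span_pair] at h
  obtain ⟨a, b, hab⟩ := h
  have := congrFun hab 2
  simp only [Pi.add_apply, Pi.smul_apply, u15p_apply.2.2, u15m_apply.2.2, e3_apply.2.2,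
    smul_eq_mul] at this
  simp at this

noncomputable abbrev W15 : Submodule ℂ (Fin 3 → ℂ) := span ℂ {u15p, Pi.single 2 1}

lemma subalg_W : IsSubalg μ3 W15 := by
  intro x hx y hy
  rw [Submodule.mem_span_pair] at hx hy
  obtain ⟨a, b, rfl⟩ := hx
  obtain ⟨c, d, rfl⟩ := hy
  have h0 : μ3 (a • u15p + b • (Pi.single 2 1 : Fin 3 → ℂ))
      (c • u15p + d • (Pi.single 2 1 : Fin 3 → ℂ)) = 0 := by
    rw [mul3]
    simp only [Pi.add_apply, Pi.smul_apply, u15p_apply.1, u15p_apply.2.1,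
      e3_apply.1, e3_apply.2.1, smul_eq_mul]
    have : (a * 1 + b * 0) * (c * 1 + d * 0) +
        (a * Complex.I + b * 0) * (c * Complex.I + d * 0) = 0 := by
      ring_nf
      rw [Complex.I_sq]
      ring
    rw [this, zero_smul]
  rw [h0]
  exact Submodule.zero_mem _

lemma inf_le_p : span ℂ {u15m} ⊓ W15 ≤ span ℂ {u15p} := by
  rintro x ⟨hv, hw⟩
  rw [SetLike.mem_coe, Submodule.mem_span_singleton] at hv
  obtain ⟨b, rfl⟩ := hv
  rw [SetLike.mem_coe, Submodule.mem_span_pair] at hw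
  obtain ⟨a, c, hac⟩ := hw
  have h0 := congrFun hac 0
  have h1 := congrFun hac 1
  simp only [Pi.add_apply, Pi.smul_apply, u15p_apply.1, u15p_apply.2.1, u15m_apply.1,
    u15m_apply.2.1, e3_apply.1, e3_apply.2.1, smul_eq_mul, mul_one, mul_zero, add_zero] at h0 h1
  have hb : b = 0 := by
    have hI : Complex.I ≠ 0 := Complex.I_ne_zero
    have ha : a = -b := by
      apply mul_right_cancel₀ hI
      rw [h1]; ring
    rw [ha] at h0
    linear_combination (-1/2 : ℂ) * h0
  rw [hb, zero_smul]
  exact Submodule.zero_mem _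

lemma e3_notmem_p : (2 : ℂ) • (Pi.single 2 1 : Fin 3 → ℂ) ∉ span ℂ {u15p} := by
  intro h
  rw [Submodule.mem_span_singleton] at h
  obtain ⟨a, ha⟩ := h
  have := congrFun ha 2
  simp only [Pi.smul_apply, u15p_apply.2.2, e3_apply.2.2, smul_eq_mul, mul_zero, mul_one] at this
  simp at this

/-- in the complex evolution algebra with `e₁² = e₂² = e₃`, `e₃² = 0`,
the spans of `e₁ + i e₂` and `e₁ - i e₂` are one-dimensional subalgebras that are not
quasi-ideals; hence the subalgebra lattice is not modular. -/
theorem stmt15 :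
    (IsSubalg (evolMul ![Pi.single 2 1, Pi.single 2 1, 0]) (Submodule.span ℂ {u15p}) ∧
      Module.finrank ℂ (Submodule.span ℂ {u15p}) = 1 ∧
      ¬ QuasiIdeal (evolMul ![Pi.single 2 1, Pi.single 2 1, 0])
        (Submodule.span ℂ {u15p})) ∧
    (IsSubalg (evolMul ![Pi.single 2 1, Pi.single 2 1, 0]) (Submodule.span ℂ {u15m}) ∧
      Module.finrank ℂ (Submodule.span ℂ {u15m}) = 1 ∧
      ¬ QuasiIdeal (evolMul ![Pi.single 2 1, Pi.single 2 1, 0])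
        (Submodule.span ℂ {u15m})) ∧
    ¬ ModularLat (evolMul ![Pi.single 2 1, Pi.single 2 1, (0 : Fin 3 → ℂ)]) := by
  refine ⟨⟨subalg_p, finrank_span_singleton u15p_ne, ?_⟩,
      ⟨subalg_m, finrank_span_singleton u15m_ne, ?_⟩, ?_⟩
  · rintro ⟨-, hq⟩
    have h := hq (span ℂ {u15m}) subalg_m
    exact e3_notmem_sup (h ▸ e3_mem_gen)
  · rintro ⟨-, hq⟩
    have h := hq (span ℂ {u15p}) subalg_p
    have hmem : (2 : ℂ) • (Pi.single 2 1 : Fin 3 → ℂ) ∈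
        gen μ3 (↑(span ℂ {u15m}) ∪ ↑(span ℂ {u15p})) := by
      rw [← mul_pm]
      apply gen_subalg'
      · exact subset_gen' _ _ (Or.inr (Submodule.mem_span_singleton_self _))
      · exact subset_gen' _ _ (Or.inl (Submodule.mem_span_singleton_self _))
    rw [h] at hmem
    rw [sup_comm] at hmem
    exact e3_notmem_sup hmem
  · intro hmod
    have hle : span ℂ {u15p} ≤ W15 := Submodule.span_mono (by intro x hx; exact Or.inl hx)
    have h := hmod (span ℂ {u15p}) (span ℂ {u15m}) W15 subalg_p subalg_m subalg_W hle
    have hmem : (2 : ℂ) • (Pi.single 2 1 : Fin 3 → ℂ) ∈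
        gen μ3 (↑(span ℂ {u15p}) ∪ ↑(span ℂ {u15m})) ⊓ W15 := by
      refine ⟨e3_mem_gen, Submodule.smul_mem _ _ ?_⟩
      exact Submodule.subset_span (Or.inr rfl)
    rw [← h] at hmem
    have hgle : gen μ3 (↑(span ℂ {u15p}) ∪ ↑(span ℂ {u15m} ⊓ W15)) ≤ span ℂ {u15p} := by
      apply gen_le' subalg_p
      rintro x (hx | hx)
      · exact hx
      · exact inf_le_p hx
    exact e3_notmem_p (hgle hmem)
end
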